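/- arXiv:2102.03772 — 3 statements merged into one kernel-verified Lean document; each statement's English description precedes it below -/
import Mathlib

section
/- Let A be a bounded linear operator on a complex Banach space X, let w ∈ X and φ ∈ X' (the continuous dual), and let λ ∈ ℂ be in the resolvent set of A. Then λ is in the resolvent set of A + φ ⊗ w if and only if φ(R(λ,A)w) ≠ 1, where φ ⊗ w denotes the rank-one operator f ↦ φ(f)·w and R(λ,A) = (λ - A)⁻¹. -/
open ContinuousLinearMap

lemma isUnit_one_sub_smulRight {X : Type*} [NormedAddCommGroup X] [NormedSpace ℂ X]
    (φ : X →L[ℂ] ℂ) (v : X) :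
    IsUnit ((1 : X →L[ℂ] X) - φ.smulRight v) ↔ φ v ≠ 1 := by
  constructor
  · intro h hc
    have hC : (↑h.unit⁻¹ : X →L[ℂ] X) * ((1 : X →L[ℂ] X) - φ.smulRight v) = 1 := by
      simpa [IsUnit.unit_spec] using h.unit.inv_mul
    have hv : v = 0 := by
      have h0 : ((1 : X →L[ℂ] X) - φ.smulRight v) v = 0 := by
        simp [hc]
      have h1 : (↑h.unit⁻¹ : X →L[ℂ] X) (((1 : X →L[ℂ] X) - φ.smulRight v) v) = v := by
        rw [← ContinuousLinearMap.mul_apply, hC, ContinuousLinearMap.one_apply]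
      rw [h0, map_zero] at h1
      exact h1.symm
    rw [hv] at hc
    simp at hc
  · intro hc
    have hne : (1 : ℂ) - φ v ≠ 0 := sub_ne_zero.mpr (Ne.symm hc)
    refine ⟨⟨(1 : X →L[ℂ] X) - φ.smulRight v,
      (1 : X →L[ℂ] X) + ((1 : ℂ) - φ v)⁻¹ • φ.smulRight v, ?_, ?_⟩, rfl⟩
    · ext f
      simp [ContinuousLinearMap.mul_apply, smul_smul]
      match_scalars
      · ring
      · field_simp
        ring
    · ext f
      simp [ContinuousLinearMap.mul_apply, smul_smul]
      match_scalars
      · ring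
      · field_simp
        ring

/-- Sherman–Morrison: for a bounded operator `A` on a complex Banach space, `w ∈ X`,
`φ ∈ X'` and `λ` in the resolvent set of `A`, the number `λ` is in the resolvent set of
`A + φ ⊗ w` if and only if `φ(R(λ,A)w) ≠ 1`. Here `φ ⊗ w` is the rank-one operator
`f ↦ φ(f) • w`, realized as `φ.smulRight w`. -/
theorem sherman_morrison_resolventSet {X : Type*} [NormedAddCommGroup X]
    [NormedSpace ℂ X] [CompleteSpace X]
    (A : X →L[ℂ] X) (w : X) (φ : X →L[ℂ] ℂ) (lam : ℂ)
    (hlam : lam ∈ resolventSet ℂ A) :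
    lam ∈ resolventSet ℂ (A + φ.smulRight w) ↔ φ (resolvent A lam w) ≠ 1 := by
  rw [spectrum.mem_resolventSet_iff] at hlam ⊢
  set L := algebraMap ℂ (X →L[ℂ] X) lam - A with hL
  have hR : resolvent A lam = Ring.inverse L := rfl
  have hLR : L * Ring.inverse L = 1 := Ring.mul_inverse_cancel _ hlam
  have hfac : algebraMap ℂ (X →L[ℂ] X) lam - (A + φ.smulRight w)
      = L * ((1 : X →L[ℂ] X) - φ.smulRight (resolvent A lam w)) := by
    have hRB : Ring.inverse L * φ.smulRight w = φ.smulRight (resolvent A lam w) := by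
      ext f
      simp [ContinuousLinearMap.mul_apply, hR, map_smul]
    rw [mul_sub, mul_one, ← hRB, ← mul_assoc, hLR, one_mul, hL]
    abel
  rw [hfac]
  rw [show L = (hlam.unit : X →L[ℂ] X) from hlam.unit_spec.symm]
  rw [Units.isUnit_units_mul]
  exact isUnit_one_sub_smulRight φ (resolvent A lam w)
end

section
/- Let (q_n) be a sequence in (0, 1/2] with Σ_n d·q_n = 1 for a positive integer d, and let λ be a complex number of modulus 1 with λ ≠ 1. Then |Σ_{n=1}^∞ d·q_n² /(λ - 1 + q_n)| < 1. -/
/-!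
For `‖λ‖ = 1` one has `re (λ - 1) = -‖λ - 1‖² / 2`, hence
`‖λ - 1 + q‖² = q² + (1 - q)‖λ - 1‖²`, which exceeds `q²` when `λ ≠ 1` and `q < 1`.
So every term satisfies `‖d q_n² / (λ - 1 + q_n)‖ < d q_n`, and summing gives
`‖Σ d q_n² / (λ - 1 + q_n)‖ < Σ d q_n = 1`.
-/

open Complex

theorem norm_tsum_lt_tsum_of_norm_lt {ι E : Type*} [Nonempty ι] [SeminormedAddCommGroup E]
    {f : ι → E} {g : ι → ℝ} (hg : Summable g) (h : ∀ i, ‖f i‖ < g i) :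
    ‖∑' i, f i‖ < ∑' i, g i := by
  have hf : Summable fun i => ‖f i‖ :=
    hg.of_nonneg_of_le (fun i => norm_nonneg _) (fun i => (h i).le)
  obtain ⟨i⟩ := ‹Nonempty ι›
  exact (norm_tsum_le_tsum_norm hf).trans_lt (hf.tsum_lt_tsum (fun i => (h i).le) (h i) hg)

theorem Complex.sq_norm_sub_one_add_ofReal {z : ℂ} (hz : ‖z‖ = 1) (q : ℝ) :
    ‖z - 1 + q‖ ^ 2 = q ^ 2 + (1 - q) * ‖z - 1‖ ^ 2 := by
  have hunit : normSq z = 1 := by rw [← Complex.sq_norm, hz, one_pow]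
  simp only [Complex.sq_norm, normSq_apply, add_re, sub_re, add_im, sub_im, ofReal_re, ofReal_im,
    one_re, one_im] at hunit ⊢
  linear_combination q * hunit

theorem Complex.lt_norm_sub_one_add_ofReal {z : ℂ} (hz : ‖z‖ = 1) (hz1 : z ≠ 1) {q : ℝ}
    (hq1 : q < 1) : q < ‖z - 1 + q‖ := by
  have hpos : 0 < (1 - q) * ‖z - 1‖ ^ 2 := by
    have : 0 < ‖z - 1‖ := norm_pos_iff.mpr (sub_ne_zero.mpr hz1)
    positivity
  refine lt_of_pow_lt_pow_left₀ 2 (norm_nonneg _) ?_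
  rw [sq_norm_sub_one_add_ofReal hz]
  linarith

theorem Complex.norm_ofReal_sq_div_sub_one_add_lt {z : ℂ} (hz : ‖z‖ = 1) (hz1 : z ≠ 1) {q : ℝ}
    (hq0 : 0 < q) (hq1 : q < 1) : ‖(q : ℂ) ^ 2 / (z - 1 + q)‖ < q := by
  have hlt := lt_norm_sub_one_add_ofReal hz hz1 hq1
  rw [norm_div, norm_pow, norm_real, Real.norm_of_nonneg hq0.le, div_lt_iff₀ (hq0.trans hlt), sq]
  exact mul_lt_mul_of_pos_left hlt hq0

/-- If `q_n ∈ (0,1/2]` with `Σ_n d·q_n = 1` for a positive integer `d`, and `λ` is a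
unimodular complex number with `λ ≠ 1`, then `|Σ_n d·q_n²/(λ - 1 + q_n)| < 1`. -/
theorem abs_tsum_resolvent_pairing_lt_one (q : ℕ → ℝ)
    (hq : ∀ n, q n ∈ Set.Ioc (0 : ℝ) (1 / 2)) (d : ℕ) (hd : 0 < d)
    (htot : ∑' n : ℕ, (d : ℝ) * q n = 1)
    (lam : ℂ) (hlam : ‖lam‖ = 1) (hne : lam ≠ 1) :
    ‖∑' n : ℕ, (d : ℂ) * (q n : ℂ) ^ 2 / (lam - 1 + (q n : ℂ))‖ < 1 := by
  have hsum : Summable fun n => (d : ℝ) * q n := by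
    by_contra h
    simp [tsum_eq_zero_of_not_summable h] at htot
  have hterm (n : ℕ) : ‖(d : ℂ) * (q n : ℂ) ^ 2 / (lam - 1 + (q n : ℂ))‖ < d * q n := by
    obtain ⟨hq0, hq12⟩ := hq n
    rw [mul_div_assoc, norm_mul, norm_natCast]
    exact mul_lt_mul_of_pos_left
      (norm_ofReal_sq_div_sub_one_add_lt hlam hne hq0 (by linarith)) (Nat.cast_pos.mpr hd)
  exact htot ▸ norm_tsum_lt_tsum_of_norm_lt hsum hterm
end

section
/- Consider the operator T on E = ℂ ⊕ ℓ¹-⊕_{n≥1} ℂ^d defined by T = S + e⊗q + q⊗e, where S is the block diagonal operator with blocks 0 (on the ℂ component) and (1-q_n)P (on the n-th ℂ^d component), P a d×d cyclic-block permutation matrix with P𝟙 = 𝟙, e = (1,0,0,…), q = (0, q_1𝟙, q_2𝟙, …), and q_n ∈ (0,1/2] with Σ d q_n = 1. Then for every λ on the unit circle that is not in the spectrum of P, λ is in the resolvent set of T. -/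
/-!
On the `n`-th block, `λ - T` acts by `B n = λ - (1 - q n) P`, coupled to the scalar
component only through the vector `𝟙`. Since `P` is an isometry of the sup norm and `λ - P` is
invertible, the blocks are invertible with a uniform bound: `λ - P` controls `B n` when `q n` is
small, and the damping `q n` does when it is not. As `B n 𝟙 = (λ - 1 + q n) 𝟙`, the equation
`(λ - T) f = g` reduces to a scalar equation for `f₀` whose coefficient is the Schur complement
`λ - ∑ d q n ^ 2 / (λ - 1 + q n)`. It is nonzero because `|q n / (λ - 1 + q n)| < 1` for
unimodular `λ ≠ 1` while `∑ d q n = 1`.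
-/

open Matrix

namespace Matrix

variable {ι 𝕜 : Type*} [Fintype ι] [DecidableEq ι]

theorem norm_mulVec_eq_of_perm [SeminormedCommRing 𝕜] {P : Matrix ι ι 𝕜} (σ : Equiv.Perm ι)
    (hP : ∀ i j, P i j = if i = σ j then 1 else 0) (v : ι → 𝕜) : ‖P *ᵥ v‖ = ‖v‖ := by
  have hPσ : P = (σ⁻¹).permMatrix 𝕜 := by
    ext i j
    simp [hP, PEquiv.toMatrix_apply, Equiv.eq_symm_apply, eq_comm]
  rw [hPσ, permMatrix_mulVec, σ⁻¹.surjective.pi_norm_comp]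

section Field

variable [Field 𝕜]

theorem mem_spectrum_of_mulVec_eq_smul {P : Matrix ι ι 𝕜} {μ : 𝕜} {v : ι → 𝕜} (hv : v ≠ 0)
    (hPv : P *ᵥ v = μ • v) : μ ∈ spectrum 𝕜 P := by
  rw [spectrum.mem_iff, ← mulVec_injective_iff_isUnit]
  intro hinj
  refine hv (hinj ?_)
  rw [Algebra.algebraMap_eq_smul_one, sub_mulVec, smul_mulVec, one_mulVec, hPv, sub_self,
    mulVec_zero]

theorem mulVec_eq_iff_eq_inv_mulVec {B : Matrix ι ι 𝕜} (hB : IsUnit B) {x y : ι → 𝕜} :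
    B *ᵥ x = y ↔ x = B⁻¹ *ᵥ y := by
  have hdet := (isUnit_iff_isUnit_det B).1 hB
  constructor
  · rintro rfl
    rw [mulVec_mulVec, nonsing_inv_mul B hdet, one_mulVec]
  · rintro rfl
    rw [mulVec_mulVec, mul_nonsing_inv B hdet, one_mulVec]

theorem inv_mulVec_of_mulVec_eq_smul {B : Matrix ι ι 𝕜} (hB : IsUnit B) {μ : 𝕜} (hμ : μ ≠ 0)
    {v : ι → 𝕜} (hBv : B *ᵥ v = μ • v) : B⁻¹ *ᵥ v = μ⁻¹ • v := by
  rw [eq_comm, ← mulVec_eq_iff_eq_inv_mulVec hB, mulVec_smul, hBv, smul_smul, inv_mul_cancel₀ hμ,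
    one_smul]

theorem mulVec_eq_add_smul_iff {B : Matrix ι ι 𝕜} (hB : IsUnit B) {μ : 𝕜} (hμ : μ ≠ 0)
    {u : ι → 𝕜} (hBu : B *ᵥ u = μ • u) {x y : ι → 𝕜} {c : 𝕜} :
    B *ᵥ x = y + c • u ↔ x = B⁻¹ *ᵥ y + (c / μ) • u := by
  rw [mulVec_eq_iff_eq_inv_mulVec hB, mulVec_add, mulVec_smul,
    inv_mulVec_of_mulVec_eq_smul hB hμ hBu, smul_smul, div_eq_mul_inv]

end Field

section NormedField

variable [NormedField 𝕜] {B : Matrix ι ι 𝕜} {C : ℝ}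

theorem isUnit_of_norm_le_mul_norm_mulVec (hB : ∀ v, ‖v‖ ≤ C * ‖B *ᵥ v‖) : IsUnit B := by
  refine mulVec_injective_iff_isUnit.1 fun v w hvw => sub_eq_zero.1 (norm_le_zero_iff.1 ?_)
  simpa [mulVec_sub, hvw] using hB (v - w)

theorem norm_inv_mulVec_le (hB : ∀ v, ‖v‖ ≤ C * ‖B *ᵥ v‖) (v : ι → 𝕜) :
    ‖B⁻¹ *ᵥ v‖ ≤ C * ‖v‖ := by
  have hBB : B *ᵥ (B⁻¹ *ᵥ v) = v :=
    (mulVec_eq_iff_eq_inv_mulVec (isUnit_of_norm_le_mul_norm_mulVec hB)).2 rfl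
  simpa only [hBB] using hB (B⁻¹ *ᵥ v)

end NormedField

theorem exists_norm_le_mul_norm_smul_sub_mulVec [NontriviallyNormedField 𝕜] [CompleteSpace 𝕜]
    {P : Matrix ι ι 𝕜} {lam : 𝕜}
    (h : lam ∉ spectrum 𝕜 P) : ∃ M : ℝ, 0 ≤ M ∧ ∀ v, ‖v‖ ≤ M * ‖lam • v - P *ᵥ v‖ := by
  have hinj : Function.Injective (algebraMap 𝕜 (Matrix ι ι 𝕜) lam - P).mulVecLin :=
    mulVec_injective_iff_isUnit.2 (spectrum.notMem_iff.1 h)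
  obtain ⟨K, -, hK⟩ := (LinearMap.injective_iff_antilipschitz _).1 hinj
  refine ⟨K, K.coe_nonneg, fun v => ?_⟩
  simpa [sub_mulVec, Algebra.algebraMap_eq_smul_one, smul_mulVec] using
    ZeroHomClass.bound_of_antilipschitz _ hK v

end Matrix

theorem norm_le_two_mul_norm_smul_sub_smul {E : Type*} [SeminormedAddCommGroup E]
    [NormedSpace ℂ E] {lam : ℂ} (hlam : ‖lam‖ = 1) {v x : E} {M t : ℝ} (hM0 : 0 ≤ M)
    (hx : ‖x‖ ≤ ‖v‖) (hM : ‖v‖ ≤ M * ‖lam • v - x‖) (ht0 : 0 ≤ t) (ht1 : t ≤ 1) :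
    ‖v‖ ≤ 2 * M * ‖lam • v - (1 - (t : ℂ)) • x‖ := by
  set y := lam • v - (1 - (t : ℂ)) • x
  have hnorm_t : ‖(t : ℂ)‖ = t := by rw [Complex.norm_real, Real.norm_of_nonneg ht0]
  rcases le_or_gt (t * M) (1 / 2) with hsmall | hlarge
  · have hperturb : ‖lam • v - x‖ ≤ ‖y‖ + t * ‖v‖ := by
      have hsplit : lam • v - x = y - (t : ℂ) • x := by simp only [y]; module
      calc ‖lam • v - x‖ ≤ ‖y‖ + ‖(t : ℂ) • x‖ := hsplit ▸ norm_sub_le _ _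
        _ ≤ ‖y‖ + t * ‖v‖ := by rw [norm_smul, hnorm_t]; gcongr
    nlinarith [mul_le_mul_of_nonneg_left hperturb hM0,
      mul_le_mul_of_nonneg_right hsmall (norm_nonneg v)]
  · have hdamped : t * ‖v‖ ≤ ‖y‖ := by
      have hnorm_1t : ‖1 - (t : ℂ)‖ = 1 - t := by
        rw [← Complex.ofReal_one, ← Complex.ofReal_sub, Complex.norm_real,
          Real.norm_of_nonneg (by linarith)]
      have := norm_sub_norm_le (lam • v) ((1 - (t : ℂ)) • x)
      rw [norm_smul, hlam, one_mul, norm_smul, hnorm_1t] at this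
      nlinarith
    nlinarith [mul_le_mul_of_nonneg_left hdamped (by positivity : 0 ≤ 2 * M),
      mul_le_mul_of_nonneg_right hlarge.le (norm_nonneg v)]

namespace Complex

theorem re_lt_one_of_norm_eq_one {z : ℂ} (hz : ‖z‖ = 1) (hz1 : z ≠ 1) : z.re < 1 := by
  refine (re_le_norm z).trans_eq hz |>.lt_of_ne fun hre => hz1 (ext hre ?_)
  have := normSq_eq_norm_sq z
  rw [hz, normSq_apply, hre] at this
  simpa using this

theorem add_half_one_sub_re_le_norm {z : ℂ} (hz : ‖z‖ = 1) {t : ℝ} (ht : t ≤ 1 / 2) :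
    t + (1 - z.re) / 2 ≤ ‖z - 1 + t‖ := by
  have hre : z.re ≤ 1 := (re_le_norm z).trans_eq hz
  have hsq : z.re * z.re + z.im * z.im = 1 := by
    rw [← normSq_apply, normSq_eq_norm_sq, hz, one_pow]
  refine le_of_sq_le_sq ?_ (norm_nonneg _)
  rw [← normSq_eq_norm_sq, normSq_apply]
  simp only [add_re, sub_re, one_re, ofReal_re, add_im, sub_im, one_im, ofReal_im]
  nlinarith

theorem sub_one_add_ne_zero {z : ℂ} (hz : ‖z‖ = 1) (hz1 : z ≠ 1) {t : ℝ} (ht0 : 0 ≤ t)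
    (ht : t ≤ 1 / 2) : z - 1 + t ≠ 0 :=
  norm_pos_iff.1 <| lt_of_lt_of_le (by linarith [re_lt_one_of_norm_eq_one hz hz1])
    (add_half_one_sub_re_le_norm hz ht)

theorem norm_div_sub_one_add_lt_one {z : ℂ} (hz : ‖z‖ = 1) (hz1 : z ≠ 1) {t : ℝ} (ht0 : 0 ≤ t)
    (ht : t ≤ 1 / 2) : ‖(t : ℂ) / (z - 1 + t)‖ < 1 := by
  have hs := re_lt_one_of_norm_eq_one hz hz1
  have hμ := add_half_one_sub_re_le_norm hz ht
  rw [norm_div, norm_real, Real.norm_of_nonneg ht0, div_lt_one (by linarith)]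
  linarith

theorem norm_div_sub_one_add_le {z : ℂ} (hz : ‖z‖ = 1) (hz1 : z ≠ 1) {t : ℝ} (ht0 : 0 ≤ t)
    (ht : t ≤ 1 / 2) : ‖(t : ℂ) / (z - 1 + t)‖ ≤ 2 / (1 - z.re) * t := by
  have hs := re_lt_one_of_norm_eq_one hz hz1
  have hμ := add_half_one_sub_re_le_norm hz ht
  rw [norm_div, norm_real, Real.norm_of_nonneg ht0, div_mul_eq_mul_div,
    div_le_div_iff₀ (by linarith) (by linarith)]
  nlinarith

end Complex

theorem summable_of_tsum_ne_zero {α β : Type*} [AddCommMonoid α] [TopologicalSpace α]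
    {f : β → α} (h : ∑' b, f b ≠ 0) : Summable f :=
  by_contra fun hf => h (tsum_eq_zero_of_not_summable hf)

theorem sub_tsum_mul_ne_zero {a : ℂ} (ha : ‖a‖ = 1) {p : ℕ → ℝ} {w : ℕ → ℂ}
    (hp : ∀ n, 0 ≤ p n) (hp1 : ∑' n, p n = 1) (hw : ∀ n, ‖w n‖ < 1) :
    a - ∑' n, (p n : ℂ) * w n ≠ 0 := by
  have hpsum : Summable p := summable_of_tsum_ne_zero (hp1 ▸ one_ne_zero)
  obtain ⟨i, hi⟩ : ∃ i, p i ≠ 0 := by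
    by_contra! h
    simp [h] at hp1
  have hle : ∀ n, ‖(p n : ℂ) * w n‖ ≤ p n := fun n => by
    rw [norm_mul, Complex.norm_real, Real.norm_of_nonneg (hp n)]
    exact mul_le_of_le_one_right (hp n) (hw n).le
  have hlt : ‖(p i : ℂ) * w i‖ < p i := by
    rw [norm_mul, Complex.norm_real, Real.norm_of_nonneg (hp i)]
    exact mul_lt_of_lt_one_right ((hp i).lt_of_ne' hi) (hw i)
  intro h
  have hnorm : ‖∑' n, (p n : ℂ) * w n‖ < 1 := calc
    _ ≤ ∑' n, ‖(p n : ℂ) * w n‖ := norm_tsum_le_tsum_norm (hpsum.of_norm_bounded hle |>.norm)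
    _ < ∑' n, p n := Summable.tsum_lt_tsum_of_nonneg (fun _ => norm_nonneg _) hle hlt hpsum
    _ = 1 := hp1
  rw [← sub_eq_zero.1 h] at hnorm
  exact hnorm.ne ha

theorem norm_sum_le_card_mul_norm {ι E : Type*} [Fintype ι] [SeminormedAddCommGroup E]
    (v : ι → E) : ‖∑ j, v j‖ ≤ Fintype.card ι * ‖v‖ := calc
  ‖∑ j, v j‖ ≤ ∑ j, ‖v j‖ := norm_sum_le _ _
  _ ≤ ∑ _j : ι, ‖v‖ := Finset.sum_le_sum fun j _ => norm_le_pi_norm v j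
  _ = Fintype.card ι * ‖v‖ := by simp

theorem lp.summable_norm_of_one {α : Type*} {E : α → Type*} [∀ i, NormedAddCommGroup (E i)]
    (f : lp E 1) : Summable fun i => ‖f i‖ := by
  simpa using (lp.memℓp f).summable (by norm_num)

section Bordered

abbrev BorderedSpace (ι : Type*) [Fintype ι] := ℂ × lp (fun _ : ℕ => ι → ℂ) 1

variable {ι : Type*} [Fintype ι] [DecidableEq ι] {L : BorderedSpace ι → BorderedSpace ι} {a : ℂ}
  {q μ : ℕ → ℂ} {B : ℕ → Matrix ι ι ℂ} {C : ℝ}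

theorem summable_mul_sum_inv_mulVec (hq : ∀ n, ‖q n‖ ≤ 1)
    (hBinv : ∀ n v, ‖(B n)⁻¹ *ᵥ v‖ ≤ C * ‖v‖) (g : lp (fun _ : ℕ => ι → ℂ) 1) :
    Summable fun n => q n * ∑ j, ((B n)⁻¹ *ᵥ g n) j := by
  refine .of_norm_bounded ((lp.summable_norm_of_one g).mul_left (Fintype.card ι * C)) fun n => ?_
  calc ‖q n * ∑ j, ((B n)⁻¹ *ᵥ g n) j‖ ≤ 1 * (Fintype.card ι * ‖(B n)⁻¹ *ᵥ g n‖) := by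
        rw [norm_mul]; gcongr; exacts [hq n, norm_sum_le_card_mul_norm _]
    _ ≤ Fintype.card ι * C * ‖g n‖ := by rw [one_mul, mul_assoc]; gcongr; exact hBinv n _

theorem bordered_apply_eq_iff
    (hL : ∀ f : BorderedSpace ι, (L f).1 = a * f.1 - ∑' n, q n * ∑ j, f.2 n j ∧
      ∀ n, (L f).2 n = B n *ᵥ f.2 n - (f.1 * q n) • 1)
    (hB : ∀ n, IsUnit (B n)) (hBinv : ∀ n v, ‖(B n)⁻¹ *ᵥ v‖ ≤ C * ‖v‖)
    (hB1 : ∀ n, B n *ᵥ 1 = μ n • 1) (hμ : ∀ n, μ n ≠ 0) (hq : ∀ n, ‖q n‖ ≤ 1)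
    (hw : Summable fun n => ‖q n / μ n‖) (f g : BorderedSpace ι) :
    L f = g ↔ (∀ n, f.2 n = (B n)⁻¹ *ᵥ g.2 n + (f.1 * (q n / μ n)) • 1) ∧
      f.1 * (a - ∑' n, Fintype.card ι * q n * (q n / μ n)) =
        g.1 + ∑' n, q n * ∑ j, ((B n)⁻¹ *ᵥ g.2 n) j := by
  have hsnd : (L f).2 = g.2 ↔ ∀ n, f.2 n = (B n)⁻¹ *ᵥ g.2 n + (f.1 * (q n / μ n)) • 1 := by
    rw [lp.ext_iff, funext_iff]
    refine forall_congr' fun n => ?_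
    rw [(hL f).2 n, sub_eq_iff_eq_add, mulVec_eq_add_smul_iff (hB n) (hμ n) (hB1 n), mul_div_assoc]
  rw [Prod.ext_iff, hsnd, and_comm]
  refine and_congr_right fun hf2 => ?_
  have hsum : ∑' n, q n * ∑ j, f.2 n j = ∑' n, q n * ∑ j, ((B n)⁻¹ *ᵥ g.2 n) j +
      f.1 * ∑' n, Fintype.card ι * q n * (q n / μ n) := by
    have hterm : ∀ n, q n * ∑ j, f.2 n j = q n * ∑ j, ((B n)⁻¹ *ᵥ g.2 n) j +
        f.1 * (Fintype.card ι * q n * (q n / μ n)) := fun n => by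
      simp only [hf2 n, Pi.add_apply, Pi.smul_apply, Pi.one_apply, smul_eq_mul, mul_one,
        Finset.sum_add_distrib, Finset.sum_const, Finset.card_univ, nsmul_eq_mul]
      ring
    have hw' : Summable fun n => Fintype.card ι * q n * (q n / μ n) :=
      .of_norm_bounded (hw.mul_left (Fintype.card ι : ℝ)) fun n => by
        rw [norm_mul, norm_mul, Complex.norm_natCast]
        exact mul_le_mul_of_nonneg_right (mul_le_of_le_one_right (Nat.cast_nonneg _) (hq n))
          (norm_nonneg _)
    simp_rw [hterm]
    rw [(summable_mul_sum_inv_mulVec hq hBinv g.2).tsum_add (hw'.mul_left f.1), tsum_mul_left]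
  rw [(hL f).1, hsum]
  constructor <;> intro h <;> linear_combination h

/-- `a - ∑' n, card ι * q n * (q n / μ n)` is the Schur complement of the block-diagonal
part `diag (B n)` of `L`. -/
theorem bijective_bordered
    (hL : ∀ f : BorderedSpace ι, (L f).1 = a * f.1 - ∑' n, q n * ∑ j, f.2 n j ∧
      ∀ n, (L f).2 n = B n *ᵥ f.2 n - (f.1 * q n) • 1)
    (hB : ∀ n, IsUnit (B n)) (hBinv : ∀ n v, ‖(B n)⁻¹ *ᵥ v‖ ≤ C * ‖v‖)
    (hB1 : ∀ n, B n *ᵥ 1 = μ n • 1) (hμ : ∀ n, μ n ≠ 0) (hq : ∀ n, ‖q n‖ ≤ 1)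
    (hw : Summable fun n => ‖q n / μ n‖)
    (hschur : a - ∑' n, Fintype.card ι * q n * (q n / μ n) ≠ 0) :
    Function.Bijective L := by
  refine (Function.bijective_iff_existsUnique L).2 fun g => ?_
  set f₀ := (g.1 + ∑' n, q n * ∑ j, ((B n)⁻¹ *ᵥ g.2 n) j) /
    (a - ∑' n, Fintype.card ι * q n * (q n / μ n))
  have hmem : Memℓp (fun n => (B n)⁻¹ *ᵥ g.2 n + (f₀ * (q n / μ n)) • (1 : ι → ℂ)) 1 := by
    refine memℓp_gen ?_
    simp only [ENNReal.toReal_one, Real.rpow_one]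
    refine .of_nonneg_of_le (fun _ => norm_nonneg _) (fun n => ?_)
      (((lp.summable_norm_of_one g.2).mul_left C).add (hw.mul_left ‖f₀‖))
    refine (norm_add_le _ _).trans (add_le_add (hBinv n _) ?_)
    rw [norm_smul, norm_mul]
    exact mul_le_of_le_one_right (by positivity) (pi_norm_const_le (1 : ℂ) |>.trans_eq norm_one)
  have hsol := bordered_apply_eq_iff hL hB hBinv hB1 hμ hq hw
  refine ⟨(f₀, ⟨_, hmem⟩), (hsol _ g).2 ⟨fun n => rfl, div_mul_cancel₀ _ hschur⟩, fun f hf => ?_⟩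
  obtain ⟨hf2, hf1⟩ := (hsol f g).1 hf
  have hf₀ : f.1 = f₀ := eq_div_of_mul_eq hschur hf1
  exact Prod.ext hf₀ (lp.ext (funext fun n => by rw [hf2 n, hf₀]))

end Bordered

section DampedBlock

variable {ι : Type*} [Fintype ι] [DecidableEq ι] {P : Matrix ι ι ℂ} {lam : ℂ} {t : ℝ}

def dampedBlock (P : Matrix ι ι ℂ) (lam : ℂ) (t : ℝ) : Matrix ι ι ℂ :=
  lam • 1 - (1 - (t : ℂ)) • P

theorem dampedBlock_mulVec (v : ι → ℂ) :
    dampedBlock P lam t *ᵥ v = lam • v - (1 - (t : ℂ)) • P *ᵥ v := by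
  simp [dampedBlock, sub_mulVec, smul_mulVec]

theorem dampedBlock_mulVec_eq_smul {u : ι → ℂ} (hPu : P *ᵥ u = u) :
    dampedBlock P lam t *ᵥ u = (lam - 1 + t) • u := by
  rw [dampedBlock_mulVec, hPu]
  module

theorem norm_le_mul_norm_dampedBlock_mulVec (hP : ∀ v, ‖P *ᵥ v‖ ≤ ‖v‖) (hlam : ‖lam‖ = 1)
    {M : ℝ} (hM0 : 0 ≤ M) (hM : ∀ v, ‖v‖ ≤ M * ‖lam • v - P *ᵥ v‖) (ht0 : 0 ≤ t) (ht1 : t ≤ 1)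
    (v : ι → ℂ) : ‖v‖ ≤ 2 * M * ‖dampedBlock P lam t *ᵥ v‖ := by
  rw [dampedBlock_mulVec]
  exact norm_le_two_mul_norm_smul_sub_smul hlam hM0 (hP v) (hM v) ht0 ht1

end DampedBlock

/-- Consider the operator `T = S + e⊗q + q⊗e` of Construction 2.1 on
`E = ℂ ⊕ (⊕_{ℓ¹, n ≥ 1} ℂ^d)`, given by
`T(f_0, f_1, f_2, …) = (Σ_n q_n⟨𝟙,f_n⟩, (1-q_1)Pf_1 + f_0 q_1 𝟙, (1-q_2)Pf_2 + f_0 q_2 𝟙, …)`,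
where `P` is a permutation matrix with `P𝟙 = 𝟙` and `q_n ∈ (0,1/2]` with `Σ_n d·q_n = 1`.
Then every unimodular `λ` which is not in the spectrum of `P` lies in the resolvent set
of `T`. -/
theorem unimodular_not_in_spectrum_of_perturbed_block_operator
    (d : ℕ) [NeZero d] (P : Matrix (Fin d) (Fin d) ℂ)
    (hPperm : ∃ σ : Equiv.Perm (Fin d), ∀ i j, P i j = if i = σ j then 1 else 0)
    (hP1 : P.mulVec (fun _ => (1 : ℂ)) = fun _ => 1)
    (q : ℕ → ℝ) (hq : ∀ n, q n ∈ Set.Ioc (0 : ℝ) (1 / 2))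
    (htot : ∑' n : ℕ, (d : ℝ) * q n = 1)
    (T : (ℂ × lp (fun _ : ℕ => Fin d → ℂ) 1) →L[ℂ] (ℂ × lp (fun _ : ℕ => Fin d → ℂ) 1))
    (hT : ∀ f : ℂ × lp (fun _ : ℕ => Fin d → ℂ) 1,
      (T f).1 = (∑' n : ℕ, (q n : ℂ) * ∑ j, (f.2 : ∀ _ : ℕ, Fin d → ℂ) n j) ∧
      ∀ n : ℕ, ((T f).2 : ∀ _ : ℕ, Fin d → ℂ) n
        = (1 - (q n : ℂ)) • P.mulVec ((f.2 : ∀ _ : ℕ, Fin d → ℂ) n)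
          + f.1 • (q n : ℂ) • (fun _ : Fin d => (1 : ℂ)))
    (lam : ℂ) (hlam : ‖lam‖ = 1) (hspec : lam ∉ spectrum ℂ P) :
    lam ∈ resolventSet ℂ T := by
  obtain ⟨σ, hσ⟩ := hPperm
  obtain ⟨M, hM0, hM⟩ := exists_norm_le_mul_norm_smul_sub_mulVec hspec
  have hlam1 : lam ≠ 1 := by
    rintro rfl
    exact hspec (mem_spectrum_of_mulVec_eq_smul one_ne_zero (by rw [one_smul]; exact hP1))
  have hq0 n : 0 ≤ q n := (hq n).1.le
  have hblock n := norm_le_mul_norm_dampedBlock_mulVec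
    (fun v => (norm_mulVec_eq_of_perm σ hσ v).le) hlam hM0 hM (hq0 n) (by linarith [(hq n).2])
  have hqsum : Summable q := (summable_mul_left_iff (Nat.cast_ne_zero.2 (NeZero.ne d))).1
    (summable_of_tsum_ne_zero (htot ▸ one_ne_zero))
  have hw : Summable fun n => ‖(q n : ℂ) / (lam - 1 + q n)‖ :=
    .of_nonneg_of_le (fun _ => norm_nonneg _)
      (fun n => Complex.norm_div_sub_one_add_le hlam hlam1 (hq0 n) (hq n).2)
      (hqsum.mul_left _)
  have hschur : lam - ∑' n, (Fintype.card (Fin d) : ℂ) * q n * (q n / (lam - 1 + q n)) ≠ 0 := by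
    simpa [mul_assoc] using sub_tsum_mul_ne_zero hlam (fun n => mul_nonneg d.cast_nonneg (hq0 n))
      htot fun n => Complex.norm_div_sub_one_add_lt_one hlam hlam1 (hq0 n) (hq n).2
  rw [spectrum.mem_resolventSet_iff, ContinuousLinearMap.isUnit_iff_bijective]
  refine bijective_bordered (a := lam) (q := fun n => q n) (B := fun n => dampedBlock P lam (q n))
    (fun f => ⟨?_, fun n => ?_⟩) (fun n => isUnit_of_norm_le_mul_norm_mulVec (hblock n))
    (fun n => norm_inv_mulVec_le (hblock n)) (fun n => dampedBlock_mulVec_eq_smul hP1)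
    (fun n => Complex.sub_one_add_ne_zero hlam hlam1 (hq0 n) (hq n).2) (fun n => ?_) hw hschur
  · simp [Algebra.algebraMap_eq_smul_one, (hT f).1]
  · simp only [Algebra.algebraMap_eq_smul_one, _root_.sub_apply,
      _root_.smul_apply, one_apply_eq_self, Prod.snd_sub, Prod.smul_snd,
      lp.coeFn_sub, lp.coeFn_smul, Pi.sub_apply, Pi.smul_apply, (hT f).2 n, dampedBlock_mulVec,
      smul_smul]
    abel
  · rw [Complex.norm_real, Real.norm_of_nonneg (hq0 n)]
    linarith [(hq n).2]
end
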